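/- arXiv:1210.7099 — 5 statements merged into one kernel-verified Lean document; each statement's English description precedes it below -/
import Mathlib

section
/- Let X and Y be real Banach spaces, T : X → Y a norm-one bounded linear operator, x' ∈ X' a norm-one functional, and y ∈ Y a nonzero vector. Then ‖T + x' ⊗ y‖ = 1 + ‖y‖ if and only if for every ε > 0 there exists x in the unit ball of X with ⟨x, x'⟩ ≥ 1 − ε and ‖T x + y/‖y‖‖ ≥ 2 − 2ε. -/
/-! Write `y = ‖y‖ • e` with `‖e‖ = 1`, so that `(T + x' ⊗ y) x = T x + (x' x * ‖y‖) • e`.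
For `‖u‖ ≤ 1` the function `s ↦ ‖u + s • e‖` is convex and `1`-Lipschitz, and bounded by `1 + s`.
Hence its defects `1 + s - ‖u + s • e‖` at a point `s ≥ 0` and at `s = 1` control each other up
to factors depending only on `s`. Almost norming `T + x' ⊗ y` therefore means exactly finding `x` in
a slice of `x'` at which `T x + e` almost has norm `2`. -/

section NormAddSmul

variable {E : Type*} [SeminormedAddCommGroup E] [NormedSpace ℝ E] {u e : E} {a b r s : ℝ}

lemma norm_add_smul_le_norm_add_smul_add (he : ‖e‖ ≤ 1) (hab : a ≤ b) :
    ‖u + b • e‖ ≤ ‖u + a • e‖ + (b - a) := by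
  have hsplit : u + b • e = (u + a • e) + (b - a) • e := by module
  calc ‖u + b • e‖ ≤ ‖u + a • e‖ + ‖(b - a) • e‖ := hsplit ▸ norm_add_le _ _
    _ ≤ ‖u + a • e‖ + (b - a) := by
      rw [norm_smul, Real.norm_of_nonneg (sub_nonneg.mpr hab)]
      gcongr
      exact mul_le_of_le_one_right (sub_nonneg.mpr hab) he

lemma mul_norm_add_smul_le (hu : ‖u‖ ≤ 1) (ha : 0 ≤ a) (hab : a ≤ b) :
    b * ‖u + a • e‖ ≤ (b - a) + a * ‖u + b • e‖ := by
  have hsplit : b • (u + a • e) = (b - a) • u + a • (u + b • e) := by module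
  have hb : 0 ≤ b := ha.trans hab
  calc b * ‖u + a • e‖ = ‖(b - a) • u + a • (u + b • e)‖ := by
        rw [← hsplit, norm_smul, Real.norm_of_nonneg hb]
    _ ≤ (b - a) * ‖u‖ + a * ‖u + b • e‖ := by
        refine (norm_add_le _ _).trans_eq ?_
        rw [norm_smul, norm_smul, Real.norm_of_nonneg (sub_nonneg.mpr hab),
          Real.norm_of_nonneg ha]
    _ ≤ (b - a) + a * ‖u + b • e‖ := by
        gcongr
        exact mul_le_of_le_one_right (sub_nonneg.mpr hab) hu

lemma norm_add_smul_le_one_add (hu : ‖u‖ ≤ 1) (he : ‖e‖ ≤ 1) (hs : 0 ≤ s) :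
    ‖u + s • e‖ ≤ 1 + s := by
  calc ‖u + s • e‖ ≤ ‖u + (0 : ℝ) • e‖ + (s - 0) := norm_add_smul_le_norm_add_smul_add he hs
    _ ≤ 1 + s := by simpa using hu

-- The factor `2` is needed: take `u = -e`, `‖e‖ = 1`, `s = 0`, `r = 1`.
lemma min_mul_two_sub_norm_add_le (hu : ‖u‖ ≤ 1) (he : ‖e‖ ≤ 1) (hs : 0 ≤ s) (hsr : s ≤ r) :
    min r 1 * (2 - ‖u + e‖) ≤ 2 * (1 + r - ‖u + s • e‖) := by
  have h₁ : ‖u + e‖ ≤ 2 := by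
    simpa [one_add_one_eq_two] using norm_add_smul_le_one_add hu he zero_le_one
  rcases le_total 1 s with h1s | hs1
  · have hlip := norm_add_smul_le_norm_add_smul_add (u := u) he h1s
    rw [one_smul] at hlip
    nlinarith [min_le_right r 1, min_le_left r 1]
  · have hconv := mul_norm_add_smul_le (e := e) hu hs hs1
    rw [one_smul, one_mul] at hconv
    have hsm : s ≤ min r 1 := le_min hsr hs1
    nlinarith [min_le_left r 1, mul_nonneg (sub_nonneg.mpr hsm) (norm_nonneg (u + e)),
      mul_nonneg hs (sub_nonneg.mpr h₁)]

lemma one_add_sub_norm_add_smul_le (hu : ‖u‖ ≤ 1) (he : ‖e‖ ≤ 1) (hsr : s ≤ r) :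
    1 + r - ‖u + s • e‖ ≤ max r 1 * (2 - ‖u + e‖) + (r - s) := by
  have h₁ : ‖u + e‖ ≤ 2 := by
    simpa [one_add_one_eq_two] using norm_add_smul_le_one_add hu he zero_le_one
  rcases le_total s 1 with hs1 | h1s
  · have hlip := norm_add_smul_le_norm_add_smul_add (u := u) he hs1
    rw [one_smul] at hlip
    nlinarith [le_max_right r 1]
  · have hconv := mul_norm_add_smul_le (e := e) hu zero_le_one h1s
    rw [one_smul, one_mul] at hconv
    nlinarith [le_max_left r 1]

end NormAddSmul

namespace ContinuousLinearMap

variable {X Y : Type*} [NormedAddCommGroup X] [NormedSpace ℝ X]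
  [NormedAddCommGroup Y] [NormedSpace ℝ Y]

lemma exists_nonneg_lt_norm_apply (S : X →L[ℝ] Y) (f : X →L[ℝ] ℝ) {c : ℝ} (hc : c < ‖S‖) :
    ∃ x : X, ‖x‖ ≤ 1 ∧ 0 ≤ f x ∧ c < ‖S x‖ := by
  obtain ⟨x, hx, hSx⟩ := S.exists_lt_apply_of_lt_opNorm hc
  rcases le_total 0 (f x) with hfx | hfx
  · exact ⟨x, hx.le, hfx, hSx⟩
  · exact ⟨-x, by simpa using hx.le, by simpa using hfx, by simpa using hSx⟩

lemma add_smulRight_smul_apply (T : X →L[ℝ] Y) (x' : X →L[ℝ] ℝ) (r : ℝ) (e : Y) (x : X) :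
    (T + x'.smulRight (r • e)) x = T x + (x' x * r) • e := by
  simp [smul_smul]

lemma norm_apply_le_one {T : X →L[ℝ] Y} (hT : ‖T‖ ≤ 1) {x : X} (hx : ‖x‖ ≤ 1) : ‖T x‖ ≤ 1 :=
  (T.unit_le_opNorm x hx).trans hT

variable {T : X →L[ℝ] Y} {x' : X →L[ℝ] ℝ} {e : Y} {r : ℝ}

lemma exists_mem_slice_of_norm_add_smulRight (hT : ‖T‖ ≤ 1) (hx' : ‖x'‖ ≤ 1) (he : ‖e‖ ≤ 1)
    (hr : 0 < r) (hS : 1 + r ≤ ‖T + x'.smulRight (r • e)‖) {ε : ℝ} (hε : 0 < ε) :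
    ∃ x : X, ‖x‖ ≤ 1 ∧ 1 - ε ≤ x' x ∧ 2 - 2 * ε ≤ ‖T x + e‖ := by
  have hm : 0 < min r 1 := lt_min hr one_pos
  obtain ⟨x, hx, ht, hSx⟩ := exists_nonneg_lt_norm_apply _ x'
    (show 1 + r - ε * min r 1 < _ by nlinarith)
  rw [add_smulRight_smul_apply] at hSx
  have hTx := norm_apply_le_one hT hx
  have ht1 : x' x ≤ 1 := (le_abs_self _).trans (norm_apply_le_one hx' hx)
  have hs : 0 ≤ x' x * r := mul_nonneg ht hr.le
  have hsr : x' x * r ≤ r := mul_le_of_le_one_left hr.le ht1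
  have hupper := norm_add_smul_le_one_add hTx he hs
  have hdefect := min_mul_two_sub_norm_add_le hTx he hs hsr
  refine ⟨x, hx, ?_, ?_⟩
  · nlinarith [min_le_left r 1]
  · nlinarith

lemma le_norm_add_smulRight_of_forall_mem_slice (hT : ‖T‖ ≤ 1) (hx' : ‖x'‖ ≤ 1) (he : ‖e‖ ≤ 1)
    (hr : 0 ≤ r)
    (H : ∀ ε > (0 : ℝ), ∃ x : X, ‖x‖ ≤ 1 ∧ 1 - ε ≤ x' x ∧ 2 - 2 * ε ≤ ‖T x + e‖) :
    1 + r ≤ ‖T + x'.smulRight (r • e)‖ := by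
  refine le_of_forall_pos_le_add fun c hc => ?_
  -- chosen so that `hdefect` bounds `1 + r - ‖(T + x'.smulRight (r • e)) x‖` by `c / K * K`
  set K := 2 * max r 1 + r
  have hK : 0 < K := by positivity
  obtain ⟨x, hx, ht, hTxe⟩ := H (c / K) (div_pos hc hK)
  have hcK : c / K * K = c := div_mul_cancel₀ c hK.ne'
  have ht1 : x' x ≤ 1 := (le_abs_self _).trans (norm_apply_le_one hx' hx)
  have hdefect := one_add_sub_norm_add_smul_le (norm_apply_le_one hT hx) he
    (mul_le_of_le_one_left hr ht1)
  have hSx := (T + x'.smulRight (r • e)).unit_le_opNorm x hx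
  rw [add_smulRight_smul_apply] at hSx
  nlinarith [le_max_right r 1]

end ContinuousLinearMap

theorem daugavet_eq_rank_one_iff_general
    {X Y : Type*} [NormedAddCommGroup X] [NormedSpace ℝ X]
    [NormedAddCommGroup Y] [NormedSpace ℝ Y]
    (T : X →L[ℝ] Y) (hT : ‖T‖ = 1)
    (x' : X →L[ℝ] ℝ) (hx' : ‖x'‖ = 1)
    (y : Y) (hy : y ≠ 0) :
    ‖T + x'.smulRight y‖ = 1 + ‖y‖ ↔
      ∀ ε > (0 : ℝ), ∃ x : X, ‖x‖ ≤ 1 ∧ 1 - ε ≤ x' x ∧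
        2 - 2 * ε ≤ ‖T x + ‖y‖⁻¹ • y‖ := by
  have hle : ‖T + x'.smulRight y‖ ≤ 1 + ‖y‖ :=
    (norm_add_le _ _).trans_eq (by rw [hT, ContinuousLinearMap.norm_smulRight_apply, hx', one_mul])
  rw [← hle.ge_iff_eq]
  have hr : 0 < ‖y‖ := norm_pos_iff.mpr hy
  set r := ‖y‖
  set e := r⁻¹ • y
  have hy' : y = r • e := (smul_inv_smul₀ hr.ne' y).symm
  have he : ‖e‖ ≤ 1 := by rw [norm_smul, norm_inv, norm_norm, inv_mul_cancel₀ hr.ne']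
  rw [hy']
  exact ⟨fun hS _ =>
      ContinuousLinearMap.exists_mem_slice_of_norm_add_smulRight hT.le hx'.le he hr hS,
    ContinuousLinearMap.le_norm_add_smulRight_of_forall_mem_slice hT.le hx'.le he hr.le⟩

/-- characterisation of the Daugavet equation for a norm-one
operator `T` and a rank-one operator `x' ⊗ y`. -/
theorem daugavet_eq_rank_one_iff
    {X Y : Type*} [NormedAddCommGroup X] [NormedSpace ℝ X] [CompleteSpace X]
    [NormedAddCommGroup Y] [NormedSpace ℝ Y] [CompleteSpace Y]
    (T : X →L[ℝ] Y) (hT : ‖T‖ = 1)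
    (x' : X →L[ℝ] ℝ) (hx' : ‖x'‖ = 1)
    (y : Y) (hy : y ≠ 0) :
    ‖T + x'.smulRight y‖ = 1 + ‖y‖ ↔
      ∀ ε > (0 : ℝ), ∃ x : X, ‖x‖ ≤ 1 ∧ 1 - ε ≤ x' x ∧
        2 - 2 * ε ≤ ‖T x + ‖y‖⁻¹ • y‖ :=
  daugavet_eq_rank_one_iff_general T hT x' hx' y hy
end

section
/- Let X, Y be real Banach spaces, T : X → Y a norm-one operator, W a set of norm-one functionals in X', and W·Y the set of rank-one operators x' ⊗ y with x' ∈ W and y ∈ Y. Then ‖T + R‖ = 1 + ‖R‖ for every R ∈ W·Y if and only if for every y in the unit sphere of Y, every x' ∈ W, and every ε > 0, there exists x in the unit ball of X with ⟨x, x'⟩ ≥ 1 − ε and ‖T x + y‖ ≥ 2 − 2ε. -/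
/-!
If `‖y‖ = 1` then `‖T + x' ⊗ y‖ = 2`, and a point `x` of the unit ball nearly attaining this
norm, with its sign chosen so that `x' x ≥ 0`, must have `x' x ≈ 1` and hence `‖T x + y‖ ≈ 2`.
Conversely, two vectors `u, v` of the unit ball with `‖u + v‖ ≈ 2` satisfy
`‖u + t v‖ ≈ 1 + t` for all `t ≥ 0`; applied to `u = T x`, `v = y / ‖y‖`, `t = (x' x) ‖y‖`
this gives `‖T + x' ⊗ y‖ ≥ 1 + ‖y‖`, the reverse inequality being the triangle inequality.
-/

open Filter Topology

section Vectors

variable {E : Type*} [SeminormedAddCommGroup E] [NormedSpace ℝ E]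

theorem le_norm_add_smul_of_norm_le_one {u v : E} (hu : ‖u‖ ≤ 1) (hv : ‖v‖ ≤ 1) {t : ℝ}
    (ht : 0 ≤ t) : (1 + t) * (‖u + v‖ - 1) ≤ ‖u + t • v‖ := by
  have huv : ‖u + v‖ ≤ 2 := (norm_add_le u v).trans (by linarith)
  rcases le_total t 1 with ht₁ | ht₁
  · have key : ‖u + v‖ ≤ ‖u + t • v‖ + (1 - t) * ‖v‖ :=
      calc ‖u + v‖ = ‖(u + t • v) + (1 - t) • v‖ := by congr 1; module
        _ ≤ ‖u + t • v‖ + ‖(1 - t) • v‖ := norm_add_le _ _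
        _ = ‖u + t • v‖ + (1 - t) * ‖v‖ := by rw [norm_smul, Real.norm_of_nonneg (by linarith)]
    nlinarith
  · have key : t * ‖u + v‖ ≤ ‖u + t • v‖ + (t - 1) * ‖u‖ :=
      calc t * ‖u + v‖ = ‖t • (u + v)‖ := by rw [norm_smul, Real.norm_of_nonneg ht]
        _ = ‖(u + t • v) + (t - 1) • u‖ := by congr 1; module
        _ ≤ ‖u + t • v‖ + ‖(t - 1) • u‖ := norm_add_le _ _
        _ = ‖u + t • v‖ + (t - 1) * ‖u‖ := by rw [norm_smul, Real.norm_of_nonneg (by linarith)]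
    nlinarith

theorem le_and_le_norm_add_of_le_norm_add_smul {u y : E} {c ε : ℝ} (hu : ‖u‖ ≤ 1)
    (hy : ‖y‖ = 1) (hc₀ : 0 ≤ c) (hc₁ : c ≤ 1) (h : 2 - ε ≤ ‖u + c • y‖) :
    1 - ε ≤ c ∧ 2 - 2 * ε ≤ ‖u + y‖ := by
  have hcy : ‖c • y‖ = c := by rw [norm_smul, hy, mul_one, Real.norm_of_nonneg hc₀]
  have hdiff : ‖c • y - y‖ = 1 - c := by
    rw [norm_sub_rev, show y - c • y = (1 - c) • y by module, norm_smul, hy, mul_one,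
      Real.norm_of_nonneg (by linarith)]
  have hc : 1 - ε ≤ c := by linarith [norm_add_le u (c • y)]
  refine ⟨hc, ?_⟩
  have := norm_add_le (u + y) (c • y - y)
  rw [add_add_sub_cancel, hdiff] at this
  linarith

end Vectors

section Operators

variable {X Y : Type*} [NormedAddCommGroup X] [NormedSpace ℝ X]
  [NormedAddCommGroup Y] [NormedSpace ℝ Y]

theorem exists_slice_of_two_le_norm_add_smulRight {T : X →L[ℝ] Y} {x' : X →L[ℝ] ℝ} {y : Y}
    (hT : ‖T‖ ≤ 1) (hx' : ‖x'‖ ≤ 1) (hy : ‖y‖ = 1) (h : 2 ≤ ‖T + x'.smulRight y‖)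
    {ε : ℝ} (hε : 0 < ε) : ∃ x : X, ‖x‖ ≤ 1 ∧ 1 - ε ≤ x' x ∧ 2 - 2 * ε ≤ ‖T x + y‖ := by
  obtain ⟨x, hx, hlt⟩ :=
    (T + x'.smulRight y).exists_lt_apply_of_lt_opNorm (r := 2 - ε) (by linarith)
  obtain ⟨z, hz, hz₀, hle⟩ : ∃ z : X, ‖z‖ ≤ 1 ∧ 0 ≤ x' z ∧ 2 - ε ≤ ‖T z + x' z • y‖ := by
    rcases le_total 0 (x' x) with h₀ | h₀
    · exact ⟨x, hx.le, h₀, by simpa using hlt.le⟩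
    · refine ⟨-x, by simpa using hx.le, by simpa using h₀, ?_⟩
      rw [map_neg, map_neg, neg_smul, ← neg_add, norm_neg]
      simpa using hlt.le
  have hz₁ : x' z ≤ 1 := (le_abs_self _).trans (by simpa using x'.le_of_opNorm_le_of_le hx' hz)
  have hTz : ‖T z‖ ≤ 1 := by simpa using T.le_of_opNorm_le_of_le hT hz
  obtain ⟨hc, hnorm⟩ := le_and_le_norm_add_of_le_norm_add_smul hTz hy hz₀ hz₁ hle
  exact ⟨z, hz, hc, hnorm⟩

theorem one_add_le_norm_add_smulRight {T : X →L[ℝ] Y} {x' : X →L[ℝ] ℝ} {y : Y}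
    (hT : ‖T‖ ≤ 1)
    (h : ∀ ε > (0 : ℝ), ∃ x : X, ‖x‖ ≤ 1 ∧ 1 - ε ≤ x' x ∧ 2 - 2 * ε ≤ ‖T x + y‖)
    (hy : ‖y‖ = 1) {s : ℝ} (hs : 0 ≤ s) : 1 + s ≤ ‖T + x'.smulRight (s • y)‖ := by
  have hlim : Tendsto (fun ε : ℝ ↦ (1 + (1 - ε) * s) * (1 - 2 * ε)) (𝓝[>] 0) (𝓝 (1 + s)) := by
    refine (Continuous.tendsto' ?_ 0 _ ?_).mono_left nhdsWithin_le_nhds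
    · fun_prop
    · ring
  refine le_of_tendsto hlim ?_
  filter_upwards [Ioo_mem_nhdsGT (by norm_num : (0 : ℝ) < 1 / 2)] with ε ⟨hε₀, hε₁⟩
  obtain ⟨x, hx, hx', hTxy⟩ := h ε hε₀
  have hTx : ‖T x‖ ≤ 1 := by simpa using T.le_of_opNorm_le_of_le hT hx
  have hcoef : (1 - ε) * s ≤ x' x * s := mul_le_mul_of_nonneg_right hx' hs
  calc (1 + (1 - ε) * s) * (1 - 2 * ε) ≤ (1 + x' x * s) * (‖T x + y‖ - 1) := by
        apply mul_le_mul <;> nlinarith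
    _ ≤ ‖T x + (x' x * s) • y‖ :=
        le_norm_add_smul_of_norm_le_one hTx hy.le (by nlinarith)
    _ = ‖(T + x'.smulRight (s • y)) x‖ := by simp [smul_smul]
    _ ≤ ‖T + x'.smulRight (s • y)‖ := by
        simpa using (T + x'.smulRight (s • y)).le_of_opNorm_le_of_le le_rfl hx

end Operators

theorem T_daugavet_wrt_WY_iff_general
    {X Y : Type*} [NormedAddCommGroup X] [NormedSpace ℝ X]
    [NormedAddCommGroup Y] [NormedSpace ℝ Y]
    (T : X →L[ℝ] Y) (hT : ‖T‖ = 1)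
    (W : Set (X →L[ℝ] ℝ)) (hW : ∀ x' ∈ W, ‖x'‖ = 1) :
    (∀ x' ∈ W, ∀ y : Y, ‖T + x'.smulRight y‖ = 1 + ‖x'.smulRight y‖) ↔
      ∀ y : Y, ‖y‖ = 1 → ∀ x' ∈ W, ∀ ε > (0 : ℝ),
        ∃ x : X, ‖x‖ ≤ 1 ∧ 1 - ε ≤ x' x ∧ 2 - 2 * ε ≤ ‖T x + y‖ := by
  constructor
  · intro h y hy x' hx' ε hε
    refine exists_slice_of_two_le_norm_add_smulRight hT.le (hW x' hx').le hy ?_ hε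
    rw [h x' hx' y, ContinuousLinearMap.norm_smulRight_apply, hW x' hx', hy]
    norm_num
  · intro h x' hx' y
    refine le_antisymm ((norm_add_le _ _).trans_eq (by rw [hT])) ?_
    rw [ContinuousLinearMap.norm_smulRight_apply, hW x' hx', one_mul]
    rcases eq_or_ne y 0 with rfl | hy
    · simp [hT]
    · have hunit := norm_smul_inv_norm (𝕜 := ℝ) hy
      simpa [smul_inv_smul₀ (norm_ne_zero_iff.mpr hy)] using
        one_add_le_norm_add_smulRight hT.le (h _ hunit x' hx') hunit (norm_nonneg y)

/-- `Y` has the `T`-Daugavet property with respect to the rank-one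
operators `W · Y` iff a geometric slice condition holds. -/
theorem T_daugavet_wrt_WY_iff
    {X Y : Type*} [NormedAddCommGroup X] [NormedSpace ℝ X] [CompleteSpace X]
    [NormedAddCommGroup Y] [NormedSpace ℝ Y] [CompleteSpace Y]
    (T : X →L[ℝ] Y) (hT : ‖T‖ = 1)
    (W : Set (X →L[ℝ] ℝ)) (hW : ∀ x' ∈ W, ‖x'‖ = 1) :
    (∀ x' ∈ W, ∀ y : Y, ‖T + x'.smulRight y‖ = 1 + ‖x'.smulRight y‖) ↔
      ∀ y : Y, ‖y‖ = 1 → ∀ x' ∈ W, ∀ ε > (0 : ℝ),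
        ∃ x : X, ‖x‖ ≤ 1 ∧ 1 - ε ≤ x' x ∧ 2 - 2 * ε ≤ ‖T x + y‖ :=
  T_daugavet_wrt_WY_iff_general T hT W hW
end

section
/- Define T, R : L¹[0,1] ⊕₁ L¹[1,2] → L¹[0,1] by T(f, g) = f and R(f, g) = (∫₁² g dx)·h₀, where h₀ is a fixed norm-one function in L¹[0,1]. Then ‖T‖ = ‖R‖ = 1 but ‖T + R‖ ≤ 1. -/
open MeasureTheory

/-! `T` and `R` are both contractions attaining norm one, at `(h₀, 0)` and `(0, 1)`. But
`T + R` is still a contraction, since `‖f + (∫ g) • h₀‖ ≤ ‖f‖ + |∫ g| ≤ ‖f‖ + ‖g‖` and the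
norm of `L¹[0,1] ⊕₁ L¹[1,2]` is exactly `‖f‖ + ‖g‖`. -/

theorem ContinuousLinearMap.opNorm_eq_one_of_norm_apply_le {𝕜 E F : Type*}
    [NontriviallyNormedField 𝕜] [SeminormedAddCommGroup E] [NormedSpace 𝕜 E]
    [SeminormedAddCommGroup F] [NormedSpace 𝕜 F] (f : E →L[𝕜] F) (hf : ∀ x, ‖f x‖ ≤ ‖x‖)
    {x : E} (hx : ‖x‖ = 1) (hfx : ‖f x‖ = 1) : ‖f‖ = 1 :=
  le_antisymm (f.opNorm_le_bound zero_le_one fun y => (one_mul ‖y‖).symm ▸ hf y)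
    (hfx ▸ f.unit_le_opNorm x hx.le)

namespace MeasureTheory

variable {α : Type*} [MeasurableSpace α] {μ : Measure α}

theorem L1.norm_integral_coeFn_le {E : Type*} [NormedAddCommGroup E] [NormedSpace ℝ E]
    [CompleteSpace E] (g : Lp E 1 μ) : ‖∫ x, g x ∂μ‖ ≤ ‖g‖ :=
  L1.integral_eq_integral g ▸ L1.norm_integral_le g

theorem Lp.exists_norm_eq_one_integral_eq_one [IsProbabilityMeasure μ] :
    ∃ g : Lp ℝ 1 μ, ‖g‖ = 1 ∧ ∫ x, g x ∂μ = 1 := by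
  refine ⟨Lp.const 1 μ 1, by simp [Lp.norm_const'], ?_⟩
  rw [integral_congr_ae (Lp.coeFn_const 1 μ 1)]
  simp

end MeasureTheory

theorem Real.isProbabilityMeasure_restrict_Icc {a b : ℝ} (h : b - a = 1) :
    IsProbabilityMeasure (volume.restrict (Set.Icc a b)) :=
  ⟨by simp [Real.volume_Icc, h]⟩

/-- with `T(f,g) = f` and `R(f,g) = (∫₁² g) · h₀` on
`L¹[0,1] ⊕₁ L¹[1,2]`, one has `‖T‖ = ‖R‖ = 1` but `‖T + R‖ ≤ 1`, so the
Daugavet equation fails. -/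
theorem daugavet_fails_without_slice_continuity
    (h₀ : Lp ℝ 1 (volume.restrict (Set.Icc (0:ℝ) 1))) (hh₀ : ‖h₀‖ = 1)
    (T R : WithLp 1 (Lp ℝ 1 (volume.restrict (Set.Icc (0:ℝ) 1)) ×
        Lp ℝ 1 (volume.restrict (Set.Icc (1:ℝ) 2))) →L[ℝ]
        Lp ℝ 1 (volume.restrict (Set.Icc (0:ℝ) 1)))
    (hT : ∀ p, T p = (WithLp.equiv 1 _ p).1)
    (hR : ∀ p, R p =
      (∫ x, ((WithLp.equiv 1 _ p).2 : ℝ → ℝ) x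
          ∂(volume.restrict (Set.Icc (1:ℝ) 2))) • h₀) :
    ‖T‖ = 1 ∧ ‖R‖ = 1 ∧ ‖T + R‖ ≤ 1 := by
  have hT_norm : ∀ p, ‖T p‖ = ‖p.fst‖ := fun p => congrArg norm (hT p)
  have hR_norm : ∀ p, ‖R p‖ ≤ ‖p.snd‖ := fun p => by
    rw [hR, norm_smul, hh₀, mul_one]
    exact L1.norm_integral_coeFn_le p.snd
  have hTR_norm : ∀ p, ‖(T + R) p‖ ≤ ‖p‖ := fun p => by
    rw [WithLp.prod_norm_eq_of_L1, add_apply]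
    exact (norm_add_le _ _).trans (add_le_add (hT_norm p).le (hR_norm p))
  have := Real.isProbabilityMeasure_restrict_Icc (a := 1) (b := 2) (by norm_num)
  obtain ⟨g₀, hg₀, hg₀_int⟩ := Lp.exists_norm_eq_one_integral_eq_one
    (μ := volume.restrict (Set.Icc (1:ℝ) 2))
  refine ⟨?_, ?_, ?_⟩
  · refine T.opNorm_eq_one_of_norm_apply_le (x := WithLp.toLp 1 (h₀, 0))
      (fun p => (hT_norm p).trans_le (WithLp.norm_fst_le (x := p))) ?_ ?_ <;> simpa [hT] using hh₀
  · refine R.opNorm_eq_one_of_norm_apply_le (x := WithLp.toLp 1 (0, g₀))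
      (fun p => (hR_norm p).trans (WithLp.norm_snd_le (x := p))) (by simpa using hg₀) ?_
    simp [hR, hg₀_int, hh₀]
  · exact (T + R).opNorm_le_bound zero_le_one fun p => (one_mul ‖p‖).symm ▸ hTR_norm p
end

section
/- Let Y be a Banach space with the Daugavet property, T : X → Y an operator whose adjoint T' is an isometry onto its range, and R : X → Y a norm-one operator. Suppose that for every ε > 0 there exist a slice S₀ ∈ S_T of the unit ball of X and an element y in the unit sphere of Y such that R(S₀) ⊆ B_ε(y). Then ‖T + R‖ = 2. -/
/-- A Banach space has the Daugavet property if `‖Id + K‖ = 1 + ‖K‖` for every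
rank-one operator `K = y' ⊗ y`. -/
def DaugavetProperty (Y : Type*) [NormedAddCommGroup Y] [NormedSpace ℝ Y] : Prop :=
  ∀ (y' : Y →L[ℝ] ℝ) (y : Y),
    ‖ContinuousLinearMap.id ℝ Y + y'.smulRight y‖ = 1 + ‖y'.smulRight y‖

/-- The natural set of slices of the unit ball of `X` associated to an operator
`T : X → Y`: slices `S(T'y'/‖T'y'‖, ε)` for `y' ∈ Y'` with `T'y' ≠ 0`,
`0 < ε < 1`. -/
def opSlices {X Y : Type*} [NormedAddCommGroup X] [NormedSpace ℝ X]
    [NormedAddCommGroup Y] [NormedSpace ℝ Y] (T : X →L[ℝ] Y) : Set (Set X) :=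
  {S | ∃ (y' : Y →L[ℝ] ℝ) (ε : ℝ), 0 < ε ∧ ε < 1 ∧ y'.comp T ≠ 0 ∧
    S = {x | ‖x‖ ≤ 1 ∧ (1 - ε) * ‖y'.comp T‖ ≤ (y'.comp T) x}}

/-!
Fix a slice `S₀ = S(f ∘ T, ε₀)` with `‖f‖ = 1`, and a unit vector `y` with
`R(S₀) ⊆ B_δ(y)`. The Daugavet property, read on the rank-one operator `f ⊗ y`, gives a
norm-one functional `g` with `g y ≈ 1` and `‖f + g‖ ≈ 2`. Since `T'` is isometric,
`‖(f + g) ∘ T‖ ≈ 2`, so some `x ∈ B_X` has `f (T x) ≈ 1` and `g (T x) ≈ 1`. The first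
puts `x` in `S₀`, hence `R x ≈ y`, and then `g ((T + R) x) ≈ g (T x) + g y ≈ 2`.
-/

namespace ContinuousLinearMap

theorem opNorm_le_of_forall_norm_comp_le {𝕜 E F : Type*} [RCLike 𝕜]
    [SeminormedAddCommGroup E] [NormedSpace 𝕜 E]
    [SeminormedAddCommGroup F] [NormedSpace 𝕜 F]
    (T : E →L[𝕜] F) {M : ℝ} (hM : 0 ≤ M) (h : ∀ y' : F →L[𝕜] 𝕜, ‖y'.comp T‖ ≤ M * ‖y'‖) :
    ‖T‖ ≤ M :=
  T.opNorm_le_bound hM fun x =>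
    NormedSpace.norm_le_dual_bound 𝕜 (T x) (by positivity) fun y' =>
      calc ‖y' (T x)‖ ≤ ‖y'.comp T‖ * ‖x‖ := (y'.comp T).le_opNorm x
        _ ≤ M * ‖y'‖ * ‖x‖ := by gcongr; exact h y'
        _ = M * ‖x‖ * ‖y'‖ := by ring

variable {E : Type*} [NormedAddCommGroup E] [NormedSpace ℝ E]

theorem apply_le_opNorm_of_norm_le_one (φ : E →L[ℝ] ℝ) {x : E} (hx : ‖x‖ ≤ 1) :
    φ x ≤ ‖φ‖ :=
  (le_abs_self _).trans <| by simpa using φ.le_of_opNorm_le_of_le le_rfl hx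

theorem exists_norm_le_one_lt_apply (φ : E →L[ℝ] ℝ) {r : ℝ} (hr : r < ‖φ‖) :
    ∃ x, ‖x‖ ≤ 1 ∧ r < φ x := by
  obtain ⟨x, hx, hrx⟩ := φ.exists_lt_apply_of_lt_opNorm hr
  rcases le_or_gt 0 (φ x) with hφx | hφx
  · exact ⟨x, hx.le, by rwa [Real.norm_of_nonneg hφx] at hrx⟩
  · refine ⟨-x, by rw [norm_neg]; exact hx.le, ?_⟩
    rwa [map_neg, ← Real.norm_of_nonpos hφx.le]

end ContinuousLinearMap

open ContinuousLinearMap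

namespace DaugavetProperty

variable {Y : Type*} [NormedAddCommGroup Y] [NormedSpace ℝ Y]

theorem exists_norm_le_one_lt_norm_add_apply_smul (hY : DaugavetProperty Y)
    (f : Y →L[ℝ] ℝ) (y : Y) {r : ℝ} (hr : r < 1 + ‖f‖ * ‖y‖) :
    ∃ z, ‖z‖ ≤ 1 ∧ 0 ≤ f z ∧ r < ‖z + f z • y‖ := by
  rw [← norm_smulRight_apply, ← hY] at hr
  obtain ⟨z, hz, hrz⟩ :=
    (ContinuousLinearMap.id ℝ Y + f.smulRight y).exists_lt_apply_of_lt_opNorm hr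
  simp only [add_apply, id_apply, smulRight_apply] at hrz
  rcases le_or_gt 0 (f z) with hfz | hfz
  · exact ⟨z, hz.le, hfz, hrz⟩
  · refine ⟨-z, by rw [norm_neg]; exact hz.le, by rw [map_neg]; linarith, ?_⟩
    rwa [map_neg, neg_smul, ← neg_add, norm_neg]

theorem exists_dual_lt_apply_lt_norm_add (hY : DaugavetProperty Y) {f : Y →L[ℝ] ℝ} {y : Y}
    (hf : ‖f‖ = 1) (hy : ‖y‖ = 1) {θ : ℝ} (hθ : 0 < θ) :
    ∃ g : Y →L[ℝ] ℝ, ‖g‖ = 1 ∧ 1 - θ < g y ∧ 2 - θ < ‖f + g‖ := by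
  wlog hθ1 : θ ≤ 1 generalizing θ
  · obtain ⟨g, hg, hgy, hfg⟩ := this one_pos le_rfl
    exact ⟨g, hg, by linarith, by linarith⟩
  obtain ⟨z, hz, hfz, hw⟩ :=
    hY.exists_norm_le_one_lt_norm_add_apply_smul f y (r := 2 - θ) (by rw [hf, hy]; linarith)
  obtain ⟨g, hg, hgw⟩ :=
    exists_dual_vector ℝ (z + f z • y) (by linarith [norm_nonneg (z + f z • y)])
  have hgw' : g z + f z * g y = ‖z + f z • y‖ := by simpa using hgw
  have hgz : g z ≤ 1 := hg ▸ g.apply_le_opNorm_of_norm_le_one hz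
  have hgy : g y ≤ 1 := hg ▸ g.apply_le_opNorm_of_norm_le_one hy.le
  have hfz1 : f z ≤ 1 := hf ▸ f.apply_le_opNorm_of_norm_le_one hz
  refine ⟨g, hg, by nlinarith, ?_⟩
  calc 2 - θ < g z + f z * g y := hgw' ▸ hw
    _ ≤ (f + g) z := by rw [add_apply]; nlinarith
    _ ≤ ‖f + g‖ := (f + g).apply_le_opNorm_of_norm_le_one hz

end DaugavetProperty

theorem two_sub_le_norm_add_of_slice_near_point {X Y : Type*}
    [NormedAddCommGroup X] [NormedSpace ℝ X] [NormedAddCommGroup Y] [NormedSpace ℝ Y]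
    (hY : DaugavetProperty Y) {T : X →L[ℝ] Y} (hT' : ∀ y' : Y →L[ℝ] ℝ, ‖y'.comp T‖ = ‖y'‖)
    (R : X →L[ℝ] Y) {S₀ : Set X} (hS₀ : S₀ ∈ opSlices T) {y : Y} (hy : ‖y‖ = 1) {δ : ℝ}
    (hR : ∀ x ∈ S₀, ‖R x - y‖ ≤ δ) :
    2 - δ ≤ ‖T + R‖ := by
  obtain ⟨y'₀, ε₀, hε₀, -, hne, rfl⟩ := hS₀
  have hy'₀ : ‖y'₀‖ ≠ 0 := by
    rw [← hT']; exact norm_ne_zero_iff.mpr hne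
  set f := ‖y'₀‖⁻¹ • y'₀
  have hf : ‖f‖ = 1 := by simp [f, norm_smul, inv_mul_cancel₀ hy'₀]
  refine le_of_forall_sub_le fun η hη => ?_
  set θ := min (η / 2) ε₀
  have hθ : 0 < θ := lt_min (by linarith) hε₀
  obtain ⟨g, hg, hgy, hfg⟩ := hY.exists_dual_lt_apply_lt_norm_add hf hy hθ
  obtain ⟨x, hx, hfgx⟩ :=
    ((f + g).comp T).exists_norm_le_one_lt_apply (r := 2 - θ) (by rwa [hT'])
  have hfx : f (T x) ≤ 1 := by
    simpa [hT', hf] using (f.comp T).apply_le_opNorm_of_norm_le_one hx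
  have hgx : g (T x) ≤ 1 := by
    simpa [hT', hg] using (g.comp T).apply_le_opNorm_of_norm_le_one hx
  simp only [comp_apply, add_apply] at hfgx
  have hxS₀ : ‖x‖ ≤ 1 ∧ (1 - ε₀) * ‖y'₀.comp T‖ ≤ (y'₀.comp T) x := by
    refine ⟨hx, ?_⟩
    have hy'₀x : (y'₀.comp T) x = ‖y'₀‖ * f (T x) := by
      simp [f, mul_inv_cancel_left₀ hy'₀]
    rw [hy'₀x, hT', mul_comm]
    gcongr
    linarith [min_le_right (η / 2) ε₀]
  have hgRx : |g (R x - y)| ≤ δ := by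
    simpa using g.le_of_opNorm_le_of_le hg.le (hR x hxS₀)
  calc 2 - δ - η ≤ g (T x) + g y + g (R x - y) := by
        linarith [min_le_left (η / 2) ε₀, neg_abs_le (g (R x - y))]
    _ = g ((T + R) x) := by rw [add_apply, map_add, map_sub]; ring
    _ ≤ ‖g.comp (T + R)‖ := (g.comp (T + R)).apply_le_opNorm_of_norm_le_one hx
    _ ≤ ‖T + R‖ := by simpa [hg] using g.opNorm_comp_le (T + R)

theorem daugavet_eq_of_slice_into_ball_general
    {X Y : Type*} [NormedAddCommGroup X] [NormedSpace ℝ X]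
    [NormedAddCommGroup Y] [NormedSpace ℝ Y]
    (hY : DaugavetProperty Y)
    (T : X →L[ℝ] Y) (hT' : ∀ y' : Y →L[ℝ] ℝ, ‖y'.comp T‖ = ‖y'‖)
    (R : X →L[ℝ] Y) (hR : ‖R‖ = 1)
    (hsl : ∀ ε > (0 : ℝ), ∃ S₀ ∈ opSlices T, ∃ y : Y, ‖y‖ = 1 ∧
      ∀ x ∈ S₀, ‖R x - y‖ ≤ ε) :
    ‖T + R‖ = 2 := by
  have hT : ‖T‖ ≤ 1 :=
    T.opNorm_le_of_forall_norm_comp_le zero_le_one fun y' => by simp [hT']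
  refine le_antisymm ?_ (le_of_forall_sub_le fun δ hδ => ?_)
  · linarith [norm_add_le T R]
  · obtain ⟨S₀, hS₀, y, hy, hRS₀⟩ := hsl δ hδ
    exact two_sub_le_norm_add_of_slice_near_point hY hT' R hS₀ hy hRS₀

/-- if `Y` has the Daugavet property, `T'` is an isometry onto its
range, `‖R‖ = 1`, and for every `ε > 0` some slice of `S_T` is mapped by `R`
into an `ε`-ball around a unit vector, then `‖T + R‖ = 2`. -/
theorem daugavet_eq_of_slice_into_ball
    {X Y : Type*} [NormedAddCommGroup X] [NormedSpace ℝ X] [CompleteSpace X]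
    [NormedAddCommGroup Y] [NormedSpace ℝ Y] [CompleteSpace Y]
    (hY : DaugavetProperty Y)
    (T : X →L[ℝ] Y) (hT' : ∀ y' : Y →L[ℝ] ℝ, ‖y'.comp T‖ = ‖y'‖)
    (R : X →L[ℝ] Y) (hR : ‖R‖ = 1)
    (hsl : ∀ ε > (0 : ℝ), ∃ S₀ ∈ opSlices T, ∃ y : Y, ‖y‖ = 1 ∧
      ∀ x ∈ S₀, ‖R x - y‖ ≤ ε) :
    ‖T + R‖ = 2 :=
  daugavet_eq_of_slice_into_ball_general hY T hT' R hR hsl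
end

section
/- Let Y be a Banach space with the Daugavet property, T : X → Y an operator whose adjoint is an isometry onto its range, and R : X → Y a norm-one weakly compact operator that is slice continuous with respect to T (i.e., every slice in S_R contains a slice in S_T). Then ‖T + R‖ = 2. -/
/-- An operator is weakly compact if the image of the closed unit ball is
relatively compact in the weak topology. -/
def WeaklyCompactOperator {X Y : Type*} [NormedAddCommGroup X] [NormedSpace ℝ X]
    [NormedAddCommGroup Y] [NormedSpace ℝ Y] (R : X →L[ℝ] Y) : Prop :=
  IsCompact (closure ((⇑R '' {x | ‖x‖ ≤ 1}) : Set (WeakSpace ℝ Y)))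

open Set Filter Topology ContinuousLinearMap

section Basics

variable {E F : Type*} [NormedAddCommGroup E] [NormedSpace ℝ E]
  [NormedAddCommGroup F] [NormedSpace ℝ F]

theorem ContinuousLinearMap.apply_le_norm_of_norm_le_one {g : E →L[ℝ] ℝ} (hg : ‖g‖ ≤ 1)
    (x : E) : g x ≤ ‖x‖ :=
  (Real.le_norm_self _).trans <| (g.le_of_opNorm_le hg x).trans_eq (one_mul _)

theorem ContinuousLinearMap.exists_norm_le_one_lt_apply_s6 (f : E →L[ℝ] ℝ) {c : ℝ} (hc : c < ‖f‖) :
    ∃ x, ‖x‖ ≤ 1 ∧ c < f x := by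
  obtain ⟨x, hx, hcx⟩ := f.exists_lt_apply_of_lt_opNorm hc
  rcases lt_abs.1 (by rwa [← Real.norm_eq_abs]) with h | h
  · exact ⟨x, hx.le, h⟩
  · exact ⟨-x, by rw [norm_neg]; exact hx.le, by rwa [map_neg]⟩

theorem ContinuousLinearMap.exists_norm_le_one_lt_norm_comp (R : E →L[ℝ] F) {c : ℝ}
    (hc : c < ‖R‖) : ∃ g : F →L[ℝ] ℝ, ‖g‖ ≤ 1 ∧ c < ‖g.comp R‖ := by
  obtain ⟨x, hx, hcx⟩ := R.exists_lt_apply_of_lt_opNorm hc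
  obtain ⟨g, hg, hgx⟩ := exists_dual_vector'' ℝ (R x)
  refine ⟨g, hg, hcx.trans_le ?_⟩
  calc ‖R x‖ = (g.comp R) x := hgx.symm
    _ ≤ ‖(g.comp R) x‖ := Real.le_norm_self _
    _ ≤ ‖g.comp R‖ := by simpa using (g.comp R).le_opNorm_of_le hx.le

theorem ContinuousLinearMap.opNorm_le_one_of_norm_comp_le {T : E →L[ℝ] F}
    (hT : ∀ f : F →L[ℝ] ℝ, ‖f.comp T‖ ≤ ‖f‖) : ‖T‖ ≤ 1 :=
  T.opNorm_le_bound zero_le_one fun x => by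
    rw [one_mul]
    refine NormedSpace.norm_le_dual_bound ℝ (T x) (norm_nonneg x) fun f => ?_
    calc ‖f (T x)‖ = ‖(f.comp T) x‖ := rfl
      _ ≤ ‖f.comp T‖ * ‖x‖ := le_opNorm _ _
      _ ≤ ‖x‖ * ‖f‖ := by rw [mul_comm]; gcongr; exact hT f

end Basics

section Slices

variable {Y : Type*} [NormedAddCommGroup Y] [NormedSpace ℝ Y]

/-- The slice `S(F / ‖F‖, δ)`; scaling the threshold by `‖F‖` makes it invariant under positive
multiples of `F`. -/
def ballSlice (F : Y →L[ℝ] ℝ) (δ : ℝ) : Set Y := {y | ‖y‖ ≤ 1 ∧ (1 - δ) * ‖F‖ ≤ F y}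

theorem ballSlice_smul (F : Y →L[ℝ] ℝ) (δ : ℝ) {c : ℝ} (hc : 0 < c) :
    ballSlice (c • F) δ = ballSlice F δ := by
  ext y
  simp only [ballSlice, mem_ofPred_eq, norm_smul, Real.norm_of_nonneg hc.le, smul_apply,
    smul_eq_mul, mul_left_comm _ c]
  rw [mul_le_mul_iff_right₀ hc]

theorem ballSlice_mono (F : Y →L[ℝ] ℝ) {δ δ' : ℝ} (h : δ ≤ δ') :
    ballSlice F δ ⊆ ballSlice F δ' := fun _ ⟨hy, hFy⟩ =>
  ⟨hy, le_trans (by gcongr) hFy⟩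

def AlmostNorms (S : Set Y) (ε : ℝ) (w : Y) : Prop :=
  ∃ G : Y →L[ℝ] ℝ, ‖G‖ ≤ 1 ∧ (1 - ε) * ‖w‖ - 2 * ε ≤ G w ∧ ∀ y ∈ S, 1 - ε ≤ G y

namespace DaugavetProperty

theorem exists_mem_ballSlice_le_norm_add (hY : DaugavetProperty Y) {F : Y →L[ℝ] ℝ} (hF : ‖F‖ = 1)
    {p : Y} (hp : ‖p‖ = 1) {δ : ℝ} (hδ : 0 < δ) : ∃ z ∈ ballSlice F δ, 2 - δ ≤ ‖z + p‖ := by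
  have hK : ‖F.smulRight p‖ = 1 := by rw [norm_smulRight_apply, hF, hp, one_mul]
  obtain ⟨w, hw, hlt⟩ := (ContinuousLinearMap.id ℝ Y + F.smulRight p).exists_lt_apply_of_lt_opNorm
    (r := 2 - δ / 2) (by rw [hY, hK]; linarith)
  simp only [add_apply, coe_id', id_eq, smulRight_apply] at hlt
  obtain ⟨z, hz, hFz, hzlt⟩ : ∃ z : Y, ‖z‖ ≤ 1 ∧ 0 ≤ F z ∧ 2 - δ / 2 < ‖z + F z • p‖ := by
    rcases le_total 0 (F w) with h | h
    · exact ⟨w, hw.le, h, hlt⟩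
    · refine ⟨-w, by rw [norm_neg]; exact hw.le, by rw [map_neg]; linarith, ?_⟩
      rwa [map_neg, neg_smul, ← neg_add, norm_neg]
  have hFz1 : F z ≤ 1 := (F.apply_le_norm_of_norm_le_one hF.le z).trans hz
  have hnorm : ‖z + F z • p‖ ≤ ‖z + p‖ + (1 - F z) := by
    calc ‖z + F z • p‖ = ‖(z + p) - (1 - F z) • p‖ := by congr 1; module
      _ ≤ ‖z + p‖ + ‖(1 - F z) • p‖ := norm_sub_le _ _
      _ = ‖z + p‖ + (1 - F z) := by rw [norm_smul, hp, mul_one, Real.norm_of_nonneg (by linarith)]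
  have hz2 : ‖z + F z • p‖ ≤ 1 + F z := by
    calc ‖z + F z • p‖ ≤ ‖z‖ + ‖F z • p‖ := norm_add_le _ _
      _ ≤ 1 + F z := by rw [norm_smul, hp, mul_one, Real.norm_of_nonneg hFz]; linarith
  exact ⟨z, ⟨hz, by rw [hF]; linarith⟩, by linarith⟩

/-- The subslice is cut out by `F + G`, where `G` norms `z + p` for a point `z` of the slice that
is almost diametral to `p`. -/
theorem exists_subslice_le_apply_of_norm_eq_one (hY : DaugavetProperty Y) {F : Y →L[ℝ] ℝ}
    (hF : ‖F‖ = 1) {δ : ℝ} (hδ : 0 < δ) {p : Y} (hp : ‖p‖ = 1) {ε : ℝ} (hε : 0 < ε) (hε1 : ε ≤ 1) :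
    ∃ F' : Y →L[ℝ] ℝ, F' ≠ 0 ∧ ∃ δ' > 0, ballSlice F' δ' ⊆ ballSlice F δ ∧
      ∃ G : Y →L[ℝ] ℝ, ‖G‖ ≤ 1 ∧ 1 - ε ≤ G p ∧ ∀ y ∈ ballSlice F' δ', 1 - ε ≤ G y := by
  set η := min δ ε
  have hη : 0 < η := lt_min hδ hε
  have hη1 : η ≤ 1 := (min_le_right _ _).trans hε1
  obtain ⟨z, ⟨hz, hFz⟩, hzp⟩ :=
    hY.exists_mem_ballSlice_le_norm_add hF hp (by positivity : 0 < η / 8)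
  obtain ⟨G, hG, hGzp⟩ := exists_dual_vector'' ℝ (z + p)
  have hGz := (G.apply_le_norm_of_norm_le_one hG z).trans hz
  have hGp := G.apply_le_norm_of_norm_le_one hG p
  rw [map_add, RCLike.ofReal_real_eq_id, id] at hGzp
  rw [hF] at hFz
  rw [hp] at hGp
  have hh : 2 - η / 4 ≤ ‖F + G‖ :=
    calc 2 - η / 4 ≤ (F + G) z := by rw [add_apply]; linarith
      _ ≤ ‖(F + G) z‖ := Real.le_norm_self _
      _ ≤ ‖F + G‖ := by simpa using (F + G).le_opNorm_of_le hz
  have hsum : ∀ y ∈ ballSlice (F + G) (η / 16), 1 - η / 2 ≤ F y ∧ 1 - η / 2 ≤ G y := by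
    rintro y ⟨hy, hhy⟩
    have := F.apply_le_norm_of_norm_le_one hF.le y
    have := G.apply_le_norm_of_norm_le_one hG y
    rw [add_apply] at hhy
    constructor <;> nlinarith
  refine ⟨F + G, norm_pos_iff.1 (by linarith), η / 16, by positivity, fun y hy => ⟨hy.1, ?_⟩,
    G, hG, by linarith [min_le_right δ ε], fun y hy => ?_⟩
  · rw [hF]; linarith [(hsum y hy).1, min_le_left δ ε]
  · linarith [(hsum y hy).2, min_le_right δ ε]

theorem exists_subslice_le_apply (hY : DaugavetProperty Y) {F : Y →L[ℝ] ℝ} (hF : F ≠ 0) {δ : ℝ}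
    (hδ : 0 < δ) (p : Y) {ε : ℝ} (hε : 0 < ε) (hε1 : ε ≤ 1) :
    ∃ F' : Y →L[ℝ] ℝ, F' ≠ 0 ∧ ∃ δ' > 0, ballSlice F' δ' ⊆ ballSlice F δ ∧
      ∃ G : Y →L[ℝ] ℝ, ‖G‖ ≤ 1 ∧ (1 - ε) * ‖p‖ ≤ G p ∧ ∀ y ∈ ballSlice F' δ', 1 - ε ≤ G y := by
  have hF₁ : ‖‖F‖⁻¹ • F‖ = 1 := norm_smul_inv_norm (𝕜 := ℝ) hF
  rw [← ballSlice_smul F δ (inv_pos.2 (norm_pos_iff.2 hF))]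
  rcases eq_or_ne p 0 with rfl | hp
  · refine ⟨_, norm_ne_zero_iff.1 (by rw [hF₁]; exact one_ne_zero), min δ ε, lt_min hδ hε,
      ballSlice_mono _ (min_le_left _ _), _, hF₁.le, by simp, fun y hy => ?_⟩
    have := hy.2
    rw [hF₁, mul_one] at this
    linarith [min_le_right δ ε]
  · obtain ⟨F', hF', δ', hδ', hsub, G, hG, hGp, hGS⟩ :=
      hY.exists_subslice_le_apply_of_norm_eq_one hF₁ hδ (norm_smul_inv_norm (𝕜 := ℝ) hp) hε hε1
    refine ⟨F', hF', δ', hδ', hsub, G, hG, ?_, hGS⟩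
    rw [map_smul, smul_eq_mul, RCLike.ofReal_real_eq_id, id,
      le_inv_mul_iff₀ (norm_pos_iff.2 hp)] at hGp
    linarith

theorem exists_subslice_of_finite (hY : DaugavetProperty Y) {F : Y →L[ℝ] ℝ} (hF : F ≠ 0) {δ : ℝ}
    (hδ : 0 < δ) {P : Set Y} (hP : P.Finite) {ε : ℝ} (hε : 0 < ε) (hε1 : ε ≤ 1) :
    ∃ F' : Y →L[ℝ] ℝ, F' ≠ 0 ∧ ∃ δ' > 0, ballSlice F' δ' ⊆ ballSlice F δ ∧ ∀ p ∈ P,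
      ∃ G : Y →L[ℝ] ℝ, ‖G‖ ≤ 1 ∧ (1 - ε) * ‖p‖ ≤ G p ∧ ∀ y ∈ ballSlice F' δ', 1 - ε ≤ G y := by
  induction P, hP using Set.Finite.induction_on generalizing F δ with
  | empty => exact ⟨F, hF, δ, hδ, subset_rfl, by simp⟩
  | @insert p P _ _ ih =>
    obtain ⟨F₁, hF₁, δ₁, hδ₁, hsub₁, G, hG, hGp, hGS⟩ := hY.exists_subslice_le_apply hF hδ p hε hε1
    obtain ⟨F₂, hF₂, δ₂, hδ₂, hsub₂, hP⟩ := ih hF₁ hδ₁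
    refine ⟨F₂, hF₂, δ₂, hδ₂, hsub₂.trans hsub₁, forall_mem_insert.2
      ⟨⟨G, hG, hGp, fun y hy => hGS y (hsub₂ hy)⟩, hP⟩⟩

theorem exists_subslice_of_isCompact (hY : DaugavetProperty Y) {F : Y →L[ℝ] ℝ} (hF : F ≠ 0)
    {δ : ℝ} (hδ : 0 < δ) {K : Set Y} (hK : IsCompact K) {ε : ℝ} (hε : 0 < ε) (hε1 : ε ≤ 1) :
    ∃ F' : Y →L[ℝ] ℝ, F' ≠ 0 ∧ ∃ δ' > 0, ballSlice F' δ' ⊆ ballSlice F δ ∧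
      ∀ w ∈ K, AlmostNorms (ballSlice F' δ') ε w := by
  obtain ⟨P, -, hP, hKP⟩ := finite_cover_balls_of_compact hK hε
  obtain ⟨F', hF', δ', hδ', hsub, hnorming⟩ := hY.exists_subslice_of_finite hF hδ hP hε hε1
  refine ⟨F', hF', δ', hδ', hsub, fun w hw => ?_⟩
  obtain ⟨t, ht, hwt⟩ := mem_iUnion₂.1 (hKP hw)
  obtain ⟨G, hG, hGt, hGS⟩ := hnorming t ht
  refine ⟨G, hG, ?_, hGS⟩
  rw [Metric.mem_ball, dist_eq_norm] at hwt
  have hGwt := G.apply_le_norm_of_norm_le_one hG (t - w)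
  have hwt' : ‖w‖ ≤ ‖t‖ + ‖w - t‖ := norm_le_insert' w t
  rw [map_sub, norm_sub_rev] at hGwt
  nlinarith

end DaugavetProperty

end Slices

theorem exists_seq_of_forall_finite {α σ : Type*} (good : σ → Prop)
    (P : Set α → σ → α → σ → Prop)
    (step : ∀ H : Set α, H.Finite → ∀ s, good s → ∃ a s', good s' ∧ P H s a s')
    {s₀ : σ} (h₀ : good s₀) :
    ∃ (a : ℕ → α) (s : ℕ → σ), s 0 = s₀ ∧ ∀ n, P (a '' Iio n) (s n) (a n) (s (n + 1)) := by
  have step' : ∀ (l : List α) (s : Subtype good), ∃ (a : α) (s' : Subtype good),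
      P {x | x ∈ l} s a s' := fun l s =>
    let ⟨a, s', hs', h⟩ := step _ l.finite_toSet s s.2
    ⟨a, ⟨s', hs'⟩, h⟩
  choose next nextState hnext using step'
  let g : ℕ → List α × Subtype good := fun n =>
    Nat.rec ([], ⟨s₀, h₀⟩) (fun _ q => (q.1 ++ [next q.1 q.2], nextState q.1 q.2)) n
  have hg : ∀ n, (g n).1 = (List.range n).map fun i => next (g i).1 (g i).2 := by
    intro n
    induction n with
    | zero => rfl
    | succ n ih => rw [List.range_succ, List.map_append, ← ih]; rfl
  refine ⟨fun n => next (g n).1 (g n).2, fun n => (g n).2, rfl, fun n => ?_⟩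
  convert hnext (g n).1 (g n).2 using 1
  ext x
  simp [hg n]

section WeakTopology

variable {E : Type*} [NormedAddCommGroup E] [NormedSpace ℝ E] {ι : Type*} {l : Filter ι}
  {u : ι → E} {y : E}

theorem mem_closure_convexHull_of_mapClusterPt
    (h : MapClusterPt (toWeakSpace ℝ E y) l fun i => toWeakSpace ℝ E (u i)) :
    y ∈ closure (convexHull ℝ (range u)) := by
  have hy : toWeakSpace ℝ E y ∈ closure (toWeakSpace ℝ E '' convexHull ℝ (range u)) := by
    refine closure_mono ?_ <|
      mem_closure_iff_clusterPt.2 (ClusterPt.mono h (le_principal_iff.2 range_mem_map))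
    rintro _ ⟨i, rfl⟩
    exact mem_image_of_mem _ (subset_convexHull ℝ _ (mem_range_self i))
  rw [← (convex_convexHull ℝ _).toWeakSpace_closure ℝ] at hy
  exact (toWeakSpace ℝ E).injective.mem_set_image.1 hy

theorem MapClusterPt.frequently_lt_apply
    (h : MapClusterPt (toWeakSpace ℝ E y) l fun i => toWeakSpace ℝ E (u i)) (f : E →L[ℝ] ℝ)
    {c : ℝ} (hc : c < f y) : ∃ᶠ i in l, c < f (u i) :=
  h.frequently (p := fun z => c < f ((toWeakSpace ℝ E).symm z)) <|
    (isOpen_lt continuous_const (WeakBilin.eval_continuous (topDualPairing ℝ E).flip f)).mem_nhds hc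

theorem WeaklyCompactOperator.exists_mapClusterPt {X : Type*} [NormedAddCommGroup X]
    [NormedSpace ℝ X] {R : X →L[ℝ] E} (hR : WeaklyCompactOperator R) [l.NeBot] {x : ι → X}
    (hx : ∀ i, ‖x i‖ ≤ 1) :
    ∃ y : E, MapClusterPt (toWeakSpace ℝ E y) l fun i => toWeakSpace ℝ E (R (x i)) := by
  obtain ⟨y, -, hy⟩ := IsCompact.exists_mapClusterPt hR (f := l)
    (u := fun i => toWeakSpace ℝ E (R (x i)))
    (le_principal_iff.2 (mem_map.2 (univ_mem' fun i => subset_closure ⟨x i, hx i, rfl⟩)))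
  exact ⟨(toWeakSpace ℝ E).symm y, by simpa using hy⟩

end WeakTopology

theorem exists_mem_convexHull_image_Iio {E : Type*} [AddCommGroup E] [Module ℝ E] {u : ℕ → E}
    {w : E} (hw : w ∈ convexHull ℝ (range u)) : ∃ M, w ∈ convexHull ℝ (u '' Iio M) := by
  have hmono : Monotone fun M => convexHull ℝ (u '' Iio M) := fun M N h =>
    convexHull_mono (image_mono (Iio_subset_Iio h))
  refine mem_iUnion.1 (convexHull_min ?_ (hmono.directed_le.convex_iUnion
    fun M => convex_convexHull ℝ _) hw)
  rintro _ ⟨i, rfl⟩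
  exact mem_iUnion.2 ⟨i + 1, subset_convexHull ℝ _ ⟨i, Nat.lt_succ_self i, rfl⟩⟩

section Construction

variable {X Y : Type*} [NormedAddCommGroup X] [NormedSpace ℝ X]
  [NormedAddCommGroup Y] [NormedSpace ℝ Y]

theorem exists_norm_le_one_apply_mem_ballSlice {T : X →L[ℝ] Y} (hT : ‖T‖ ≤ 1)
    {F : Y →L[ℝ] ℝ} (hFT : ‖F.comp T‖ = ‖F‖) (hF : F ≠ 0) {δ : ℝ} (hδ : 0 < δ) :
    ∃ x, ‖x‖ ≤ 1 ∧ T x ∈ ballSlice F δ := by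
  obtain ⟨x, hx, hFx⟩ := (F.comp T).exists_norm_le_one_lt_apply_s6 (c := (1 - δ) * ‖F‖)
    (by rw [hFT]; nlinarith [norm_pos_iff.2 hF])
  exact ⟨x, hx, (T.le_of_opNorm_le hT x).trans (by linarith), hFx.le⟩

theorem DaugavetProperty.exists_seq_ballSlice (hY : DaugavetProperty Y) {T : X →L[ℝ] Y}
    (hT : ∀ f : Y →L[ℝ] ℝ, ‖f.comp T‖ = ‖f‖) (R : X →L[ℝ] Y) {F₀ : Y →L[ℝ] ℝ} (hF₀ : F₀ ≠ 0)
    {δ₀ : ℝ} (hδ₀ : 0 < δ₀) {ε : ℝ} (hε : 0 < ε) (hε1 : ε ≤ 1) :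
    ∃ (x : ℕ → X) (S : ℕ → Set Y), S 0 = ballSlice F₀ δ₀ ∧ Antitone S ∧ ∀ n,
      ‖x n‖ ≤ 1 ∧ T (x n) ∈ S n ∧
        ∀ w ∈ convexHull ℝ (R '' (x '' Iio n)), AlmostNorms (S (n + 1)) ε w := by
  have hT1 := opNorm_le_one_of_norm_comp_le fun f => (hT f).le
  obtain ⟨x, s, hs₀, hstep⟩ := exists_seq_of_forall_finite
    (fun s : (Y →L[ℝ] ℝ) × ℝ => s.1 ≠ 0 ∧ 0 < s.2)
    (fun H s x s' => (‖x‖ ≤ 1 ∧ T x ∈ ballSlice s.1 s.2) ∧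
      ballSlice s'.1 s'.2 ⊆ ballSlice s.1 s.2 ∧
        ∀ w ∈ convexHull ℝ (R '' H), AlmostNorms (ballSlice s'.1 s'.2) ε w)
    (fun H hH s ⟨hF, hδ⟩ => by
      obtain ⟨x, hx⟩ := exists_norm_le_one_apply_mem_ballSlice hT1 (hT s.1) hF hδ
      obtain ⟨F', hF', δ', hδ', hsub, hG⟩ := hY.exists_subslice_of_isCompact hF hδ
        ((hH.image R).isCompact_convexHull (𝕜 := ℝ)) hε hε1
      exact ⟨x, (F', δ'), ⟨hF', hδ'⟩, hx, hsub, hG⟩)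
    (s₀ := (F₀, δ₀)) ⟨hF₀, hδ₀⟩
  exact ⟨x, fun n => ballSlice (s n).1 (s n).2, by simp only [hs₀],
    antitone_nat_of_succ_le fun n => (hstep n).2.1,
    fun n => ⟨(hstep n).1.1, (hstep n).1.2, (hstep n).2.2⟩⟩

theorem le_norm_add_of_mapClusterPt {T R : X →L[ℝ] Y} {x : ℕ → X} {S : ℕ → Set Y}
    (hS : Antitone S) (hx : ∀ n, ‖x n‖ ≤ 1) (hTx : ∀ n, T (x n) ∈ S n) {ε : ℝ} (hε : 0 < ε)
    (hε1 : ε ≤ 1) (hG : ∀ n, ∀ w ∈ convexHull ℝ (R '' (x '' Iio n)), AlmostNorms (S (n + 1)) ε w)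
    {y : Y} (hy : MapClusterPt (toWeakSpace ℝ Y y) atTop fun n => toWeakSpace ℝ Y (R (x n))) :
    (1 - ε) * (‖y‖ - ε) + 1 - 5 * ε ≤ ‖T + R‖ := by
  obtain ⟨w, hw, hyw⟩ := Metric.mem_closure_iff.1 (mem_closure_convexHull_of_mapClusterPt hy) ε hε
  obtain ⟨M, hwM⟩ := exists_mem_convexHull_image_Iio hw
  obtain ⟨G, hG1, hGw, hGS⟩ := hG M w (by rwa [image_image])
  obtain ⟨n, hn, hGRx⟩ :=
    frequently_atTop.1 (hy.frequently_lt_apply G (c := G y - ε) (by linarith)) (M + 1)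
  have hGTx : 1 - ε ≤ G (T (x n)) := hGS _ (hS hn (hTx n))
  rw [dist_eq_norm] at hyw
  have hGyw : G w - G y ≤ ‖y - w‖ := by
    rw [← map_sub, norm_sub_rev]; exact G.apply_le_norm_of_norm_le_one hG1 _
  have hwy : ‖y‖ ≤ ‖w‖ + ‖y - w‖ := norm_le_insert' y w
  calc (1 - ε) * (‖y‖ - ε) + 1 - 5 * ε ≤ G (T (x n)) + G (R (x n)) := by nlinarith
    _ = G ((T + R) (x n)) := by simp
    _ ≤ ‖(T + R) (x n)‖ := G.apply_le_norm_of_norm_le_one hG1 _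
    _ ≤ ‖T + R‖ := by simpa using (T + R).le_opNorm_of_le (hx n)

end Construction

theorem DaugavetProperty.two_sub_le_norm_add {X Y : Type*} [NormedAddCommGroup X]
    [NormedSpace ℝ X] [NormedAddCommGroup Y] [NormedSpace ℝ Y] (hY : DaugavetProperty Y)
    {T : X →L[ℝ] Y} (hT : ∀ f : Y →L[ℝ] ℝ, ‖f.comp T‖ = ‖f‖) {R : X →L[ℝ] Y} (hR : ‖R‖ = 1)
    (hwc : WeaklyCompactOperator R) (hsc : ∀ S ∈ opSlices R, ∃ S₁ ∈ opSlices T, S₁ ⊆ S)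
    {ε : ℝ} (hε : 0 < ε) (hε1 : ε < 1) : 2 - 9 * ε ≤ ‖T + R‖ := by
  obtain ⟨g, hg, hgR⟩ := R.exists_norm_le_one_lt_norm_comp (c := 1 - ε) (by linarith)
  have hgR0 : g.comp R ≠ 0 := norm_pos_iff.1 (by linarith)
  obtain ⟨_, ⟨u, ε₁, hε₁, -, huT, rfl⟩, hsub⟩ := hsc _ ⟨g, ε, hε, hε1, hgR0, rfl⟩
  have hu : u ≠ 0 := by rintro rfl; exact huT (zero_comp T)
  obtain ⟨x, S, hS₀, hS, hxS⟩ := hY.exists_seq_ballSlice hT R hu hε₁ hε hε1.le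
  have hgx : ∀ n, (1 - ε) * ‖g.comp R‖ ≤ g (R (x n)) := fun n => by
    have hTx : T (x n) ∈ ballSlice u ε₁ := hS₀ ▸ hS (Nat.zero_le n) (hxS n).2.1
    exact (hsub ⟨(hxS n).1, by rw [hT]; exact hTx.2⟩).2
  obtain ⟨y, hy⟩ := hwc.exists_mapClusterPt (l := atTop) fun n => (hxS n).1
  have hgy : (1 - ε) * ‖g.comp R‖ ≤ g y := by
    have hC : convexHull ℝ (range fun n => R (x n)) ⊆ {z | (1 - ε) * ‖g.comp R‖ ≤ g z} :=
      convexHull_min (range_subset_iff.2 hgx) (convex_halfSpace_ge g.isLinear _)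
    exact closure_minimal hC (isClosed_le continuous_const g.continuous)
      (mem_closure_convexHull_of_mapClusterPt hy)
  have hy1 : (1 - ε) ^ 2 ≤ ‖y‖ := by
    nlinarith [g.apply_le_norm_of_norm_le_one hg y]
  have := le_norm_add_of_mapClusterPt hS (fun n => (hxS n).1) (fun n => (hxS n).2.1) hε hε1.le
    (fun n => (hxS n).2.2) hy
  nlinarith [mul_le_mul_of_nonneg_left hy1 (sub_nonneg.2 hε1.le),
    mul_nonneg (mul_nonneg hε.le hε.le) (sub_nonneg.2 hε1.le)]

theorem daugavet_eq_of_weakly_compact_slice_continuous_general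
    {X Y : Type*} [NormedAddCommGroup X] [NormedSpace ℝ X]
    [NormedAddCommGroup Y] [NormedSpace ℝ Y]
    (hY : DaugavetProperty Y)
    (T : X →L[ℝ] Y) (hT' : ∀ y' : Y →L[ℝ] ℝ, ‖y'.comp T‖ = ‖y'‖)
    (R : X →L[ℝ] Y) (hR : ‖R‖ = 1)
    (hwc : WeaklyCompactOperator R)
    (hsc : ∀ S ∈ opSlices R, ∃ S₁ ∈ opSlices T, S₁ ⊆ S) :
    ‖T + R‖ = 2 := by
  have hT1 : ‖T‖ ≤ 1 := opNorm_le_one_of_norm_comp_le fun f => (hT' f).le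
  refine le_antisymm ((norm_add_le T R).trans (by linarith)) (le_of_forall_sub_le fun ε hε => ?_)
  have h := hY.two_sub_le_norm_add hT' hR hwc hsc (ε := min (ε / 9) (1 / 2)) (by positivity)
    ((min_le_right _ _).trans_lt (by norm_num))
  linarith [min_le_left (ε / 9) (1 / 2)]

/-- if `Y` has the Daugavet property, `T'` is an isometry onto its
range, and `R` is a norm-one weakly compact operator that is slice continuous
with respect to `T`, then `‖T + R‖ = 2`. -/
theorem daugavet_eq_of_weakly_compact_slice_continuous
    {X Y : Type*} [NormedAddCommGroup X] [NormedSpace ℝ X] [CompleteSpace X]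
    [NormedAddCommGroup Y] [NormedSpace ℝ Y] [CompleteSpace Y]
    (hY : DaugavetProperty Y)
    (T : X →L[ℝ] Y) (hT' : ∀ y' : Y →L[ℝ] ℝ, ‖y'.comp T‖ = ‖y'‖)
    (R : X →L[ℝ] Y) (hR : ‖R‖ = 1)
    (hwc : WeaklyCompactOperator R)
    (hsc : ∀ S ∈ opSlices R, ∃ S₁ ∈ opSlices T, S₁ ⊆ S) :
    ‖T + R‖ = 2 :=
  daugavet_eq_of_weakly_compact_slice_continuous_general hY T hT' R hR hwc hsc
end
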